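/- arXiv:1311.6788 — 2 statements merged into one kernel-verified Lean document; each statement's English description precedes it below -/
import Mathlib

section
/- Let A be a graded-commutative DGA over ℝ with Aᵏ = 0 for k < 0 and for k > n. Let d be its differential, h ∈ A a sum of homogeneous elements of odd degree with dh = 0, and b ∈ A a sum of homogeneous elements of positive even degree (hence b is nilpotent). Set h' = h + db. Then left multiplication by exp(b) = Σ_{m≥0} bᵐ/m! (a finite sum) is an invertible chain map of ℤ₂-graded complexes from (A, d_{h'}) to (A, d_h), with inverse left multiplication by exp(−b). Consequently it induces isomorphisms H^±(A, d_{h'}) ≅ H^±(A, d_h) of the even and odd twisted cohomology groups; i.e. the twisted cohomology depends only on the d-cohomology class of h. -/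
open LinearMap

/-- The (truncated, hence finite) exponential sum `exp b = Σ_{m=0}^{N} bᵐ/m!`.
When `b` is nilpotent with `b^m = 0` for `m > N`, this is the full exponential
`Σ_{m≥0} bᵐ/m!`. -/
noncomputable abbrev expSum {A : Type*} [Ring A] [Algebra ℝ A] (N : ℕ) (b : A) : A :=
  ∑ m ∈ Finset.range (N + 1), (m.factorial : ℝ)⁻¹ • b ^ m

/-- The cohomology of the (parity-reversing) differential `D` on the parity subspace `P`:
the kernel of `D` intersected with `P`, modulo the image of `D`. -/
abbrev cohQuot {A : Type*} [Ring A] [Algebra ℝ A] (D : A →ₗ[ℝ] A) (P : Submodule ℝ A) :=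
  ↥(P ⊓ LinearMap.ker D) ⧸ (LinearMap.range D).comap (P ⊓ LinearMap.ker D).subtype

/-!
Even elements of a graded-commutative DGA are central, and on them `d` satisfies the unsigned
Leibniz rule. An element `b` of positive even degree is nilpotent (`bᵐ` has degree `≥ 2m`), so
`d (exp b) = exp b * d b`, whence `exp b * (d + h + d b) = (d + h) * exp b`: left multiplication by
the unit `exp b` conjugates `d_{h + d b}` into `d_h`. Since `exp b` is even it preserves parity,
so it induces isomorphisms of the even and odd twisted cohomology.
-/

section Graded

variable {ι R A : Type*} [CommSemiring R]

theorem LinearMap.eq_zero_of_mem_iSup_of_homogeneous [DecidableEq ι] {M N : Type*}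
    [AddCommMonoid A] [Module R A] [AddCommMonoid M] [AddCommMonoid N] [Module R M] [Module R N]
    (𝒜 : ι → Submodule R A) [DirectSum.Decomposition 𝒜] {ℳ : Type*} {P : ℳ → Submodule R M}
    (B : M →ₗ[R] A →ₗ[R] N) (hB : ∀ k i, ∀ x ∈ P k, ∀ y ∈ 𝒜 i, B x y = 0)
    {x : M} (hx : x ∈ ⨆ k, P k) (y : A) : B x y = 0 := by
  have hB' : ∀ k, P k ≤ ker B := fun k x hx => by
    ext y
    exact DirectSum.Decomposition.inductionOn 𝒜 (motive := fun y => B x y = 0) (map_zero _)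
      (fun y => hB k _ x hx _ y.2) (fun y z hy hz => by rw [map_add, hy, hz, add_zero]) y
  rw [mem_ker.1 (iSup_le hB' hx), zero_apply]

variable [Semiring A] [Algebra R A]

theorem mul_mem_iSup_of_add_eq [Add ι] (𝒜 : ι → Submodule R A) [SetLike.GradedMul 𝒜]
    {κ₁ κ₂ κ₃ : Sort*} {f : κ₁ → ι} {g : κ₂ → ι} {k : κ₃ → ι}
    (hfg : ∀ i j, ∃ l, f i + g j = k l) {x y : A}
    (hx : x ∈ ⨆ i, 𝒜 (f i)) (hy : y ∈ ⨆ j, 𝒜 (g j)) : x * y ∈ ⨆ l, 𝒜 (k l) := by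
  refine (?_ : (⨆ i, 𝒜 (f i)) * (⨆ j, 𝒜 (g j)) ≤ ⨆ l, 𝒜 (k l)) (Submodule.mul_mem_mul hx hy)
  rw [Submodule.iSup_mul]
  refine iSup_le fun i => ?_
  rw [Submodule.mul_iSup]
  refine iSup_le fun j => Submodule.mul_le.2 fun a ha c hc => ?_
  obtain ⟨l, hl⟩ := hfg i j
  exact Submodule.mem_iSup_of_mem l (hl ▸ SetLike.mul_mem_graded ha hc)

variable (𝒜 : ℤ → Submodule R A)

def degreeGE (i : ℤ) : Submodule R A := ⨆ j : ℕ, 𝒜 (i + j)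

theorem degreeGE_eq_bot {n i : ℤ} (hbdd : ∀ k, n < k → 𝒜 k = ⊥) (hi : n < i) :
    degreeGE 𝒜 i = ⊥ :=
  eq_bot_iff.2 <| iSup_le fun j => (hbdd _ (by omega)).le

variable [SetLike.GradedMonoid 𝒜]

theorem one_mem_degreeGE_zero : (1 : A) ∈ degreeGE 𝒜 0 :=
  Submodule.mem_iSup_of_mem 0 (by simpa using SetLike.one_mem_graded 𝒜)

theorem mul_mem_degreeGE {i j : ℤ} {x y : A} (hx : x ∈ degreeGE 𝒜 i) (hy : y ∈ degreeGE 𝒜 j) :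
    x * y ∈ degreeGE 𝒜 (i + j) :=
  mul_mem_iSup_of_add_eq 𝒜 (fun k l => ⟨k + l, by push_cast; ring⟩) hx hy

theorem pow_mem_degreeGE {i : ℤ} {x : A} (hx : x ∈ degreeGE 𝒜 i) (m : ℕ) :
    x ^ m ∈ degreeGE 𝒜 (m * i) := by
  induction m with
  | zero => simpa using one_mem_degreeGE_zero 𝒜
  | succ m ih => simpa [pow_succ, add_mul] using mul_mem_degreeGE 𝒜 ih hx

theorem pow_eq_zero_of_mem_degreeGE_one {n : ℕ} (hbdd : ∀ k : ℤ, n < k → 𝒜 k = ⊥) {x : A}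
    (hx : x ∈ degreeGE 𝒜 1) : x ^ (n + 1) = 0 := by
  have := pow_mem_degreeGE 𝒜 hx (n + 1)
  rwa [degreeGE_eq_bot 𝒜 hbdd (by push_cast; omega), Submodule.mem_bot] at this

def evenSubalgebra : Subalgebra R A :=
  (⨆ k : ℤ, 𝒜 (2 * k)).toSubalgebra
    (Submodule.mem_iSup_of_mem 0 (by simpa using SetLike.one_mem_graded 𝒜))
    (fun _ _ => mul_mem_iSup_of_add_eq 𝒜 fun i j => ⟨i + j, by ring⟩)

theorem mul_mem_odd_of_mem_evenSubalgebra {x y : A} (hx : x ∈ evenSubalgebra 𝒜)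
    (hy : y ∈ ⨆ k : ℤ, 𝒜 (2 * k + 1)) : x * y ∈ ⨆ k : ℤ, 𝒜 (2 * k + 1) :=
  mul_mem_iSup_of_add_eq 𝒜 (fun i j => ⟨i + j, by ring⟩) hx hy

end Graded

theorem map_mulLeftLinearEquiv_eq_self {R A : Type*}
    [CommSemiring R] [Semiring A] [Algebra R A] {S : Subalgebra R A}
    (u : Aˣ) (hu : (u : A) ∈ S) (hu' : ((u⁻¹ : Aˣ) : A) ∈ S)
    {P : Submodule R A} (hP : ∀ c ∈ S, ∀ x ∈ P, c * x ∈ P) :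
    P.map (u.mulLeftLinearEquiv R A : A →ₗ[R] A) = P :=
  le_antisymm (Submodule.map_le_iff_le_comap.2 fun x hx => hP _ hu x hx)
    fun y hy => (Submodule.mem_map_equiv _).2 (hP _ hu' y hy)

section Exp

variable {A : Type*} [Ring A] [Algebra ℝ A]

theorem expSum_mem {S : Subalgebra ℝ A} {b : A} (hb : b ∈ S) (N : ℕ) : expSum N b ∈ S :=
  sum_mem fun m _ => S.smul_mem (pow_mem hb m) _

theorem expSum_mul_expSum_neg {N : ℕ} {b : A} (hb : b ^ (N + 1) = 0) :
    expSum N b * expSum N (-b) = 1 := by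
  -- Mathlib's exponential of a nilpotent element, `IsNilpotent.exp`, lives over `ℚ`.
  let _ : Module ℚ A := Module.compHom A (algebraMap ℚ ℝ)
  have expSum_eq_exp : ∀ c : A, c ^ (N + 1) = 0 → expSum N c = IsNilpotent.exp c := by
    intro c hc
    rw [IsNilpotent.exp_eq_sum hc]
    refine Finset.sum_congr rfl fun m _ => ?_
    change _ = algebraMap ℚ ℝ (m.factorial : ℚ)⁻¹ • c ^ m
    rw [map_inv₀, map_natCast]
  rw [expSum_eq_exp b hb, expSum_eq_exp (-b) (by rw [neg_pow, hb, mul_zero]),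
    IsNilpotent.exp_mul_exp_neg_self ⟨N + 1, hb⟩]

variable (D : A →ₗ[ℝ] A) {b : A}

theorem map_pow_succ_of_leibniz (hleib : ∀ y, D (b * y) = D b * y + b * D y)
    (hcomm : Commute b (D b)) (m : ℕ) : D (b ^ (m + 1)) = ((m : ℝ) + 1) • (b ^ m * D b) := by
  induction m with
  | zero => simp
  | succ m ih =>
    rw [pow_succ' b (m + 1), hleib, ih, mul_smul_comm, ← mul_assoc, ← pow_succ',
      ← (hcomm.pow_left (m + 1)).eq]
    push_cast
    module

theorem map_expSum_of_leibniz (hleib : ∀ y, D (b * y) = D b * y + b * D y)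
    (hcomm : Commute b (D b)) (hD1 : D 1 = 0) {N : ℕ} (hb : b ^ (N + 1) = 0) :
    D (expSum N b) = expSum N b * D b := by
  have top_vanishes : b ^ N * D b = 0 := by
    have := map_pow_succ_of_leibniz D hleib hcomm N
    rwa [hb, map_zero, eq_comm, smul_eq_zero, or_iff_right (by positivity)] at this
  rw [map_sum, Finset.sum_range_succ', pow_zero, map_smul, hD1, smul_zero, add_zero,
    Finset.sum_mul, Finset.sum_range_succ, smul_mul_assoc, top_vanishes, smul_zero, add_zero]
  refine Finset.sum_congr rfl fun m _ => ?_
  rw [map_smul, map_pow_succ_of_leibniz D hleib hcomm, smul_smul, smul_mul_assoc]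
  congr 1
  rw [Nat.factorial_succ]
  push_cast
  field_simp

theorem mul_twisted_eq_twisted_mul {u c h x : A} (hleib : D (u * x) = D u * x + u * D x)
    (hDu : D u = u * c) (hcomm : Commute u h) :
    u * (D x + (h + c) * x) = D (u * x) + h * (u * x) := by
  rw [hleib, hDu, ← mul_assoc h, ← hcomm.eq]
  noncomm_ring

end Exp

section Cohomology

variable {A : Type*} [Ring A] [Algebra ℝ A] (e : A ≃ₗ[ℝ] A) {D D' : A →ₗ[ℝ] A}

theorem map_ker_of_comp_eq (hDe : (e : A →ₗ[ℝ] A) ∘ₗ D' = D ∘ₗ e) :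
    (ker D').map (e : A →ₗ[ℝ] A) = ker D := by
  rw [← LinearEquiv.ker_comp e D', hDe, ker_comp,
    Submodule.map_comap_eq_of_surjective e.surjective]

theorem map_range_of_comp_eq (hDe : (e : A →ₗ[ℝ] A) ∘ₗ D' = D ∘ₗ e) :
    (range D').map (e : A →ₗ[ℝ] A) = range D := by
  rw [← range_comp, hDe, LinearEquiv.range_comp]

theorem nonempty_cohQuot_equiv_of_comp_eq (hDe : (e : A →ₗ[ℝ] A) ∘ₗ D' = D ∘ₗ e)
    {P : Submodule ℝ A} (hP : P.map (e : A →ₗ[ℝ] A) = P) :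
    Nonempty (cohQuot D' P ≃ₗ[ℝ] cohQuot D P) := by
  have hcycles : (P ⊓ ker D').map (e : A →ₗ[ℝ] A) = P ⊓ ker D := by
    rw [Submodule.map_inf _ e.injective, hP, map_ker_of_comp_eq e hDe]
  refine ⟨Submodule.Quotient.equiv _ _ (e.ofSubmodules _ _ hcycles) ?_⟩
  ext y
  rw [Submodule.mem_map_equiv, Submodule.mem_comap, Submodule.mem_comap,
    ← map_range_of_comp_eq e hDe, Submodule.mem_map_equiv]
  rfl

end Cohomology

section GradedCommutative

variable {A : Type*} [Ring A] [Algebra ℝ A] (𝒜 : ℤ → Submodule ℝ A) [GradedAlgebra 𝒜]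

theorem commute_of_mem_evenSubalgebra
    (gcomm : ∀ (i j : ℤ), ∀ x ∈ 𝒜 i, ∀ y ∈ 𝒜 j, x * y = ((-1 : ℝ) ^ (i * j)) • (y * x))
    {x : A} (hx : x ∈ evenSubalgebra 𝒜) (y : A) : Commute x y := by
  refine sub_eq_zero.1 <| (mul ℝ A - (mul ℝ A).flip).eq_zero_of_mem_iSup_of_homogeneous 𝒜
    (fun k i x hx y hy => ?_) hx y
  simp [gcomm _ _ x hx y hy, ((even_two_mul k).mul_right i).neg_one_zpow]

theorem map_mul_of_mem_evenSubalgebra (d : A →ₗ[ℝ] A)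
    (leibniz : ∀ (i j : ℤ), ∀ x ∈ 𝒜 i, ∀ y ∈ 𝒜 j,
      d (x * y) = d x * y + ((-1 : ℝ) ^ i) • (x * d y))
    {x : A} (hx : x ∈ evenSubalgebra 𝒜) (y : A) : d (x * y) = d x * y + x * d y := by
  refine sub_eq_zero.1 <| ((mul ℝ A).compr₂ d - (mul ℝ A ∘ₗ d + (mul ℝ A).compl₂ d))
    |>.eq_zero_of_mem_iSup_of_homogeneous 𝒜 (fun k i x hx y hy => ?_) hx y
  simp [leibniz _ _ x hx y hy, (even_two_mul k).neg_one_zpow]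

theorem expSum_mul_twisted_eq
    (gcomm : ∀ (i j : ℤ), ∀ x ∈ 𝒜 i, ∀ y ∈ 𝒜 j, x * y = ((-1 : ℝ) ^ (i * j)) • (y * x))
    (d : A →ₗ[ℝ] A)
    (leibniz : ∀ (i j : ℤ), ∀ x ∈ 𝒜 i, ∀ y ∈ 𝒜 j,
      d (x * y) = d x * y + ((-1 : ℝ) ^ i) • (x * d y))
    {b : A} (hb : b ∈ evenSubalgebra 𝒜) {N : ℕ} (hnil : b ^ (N + 1) = 0) (h x : A) :
    expSum N b * (d x + (h + d b) * x) = d (expSum N b * x) + h * (expSum N b * x) := by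
  have hleib {y : A} (hy : y ∈ evenSubalgebra 𝒜) := map_mul_of_mem_evenSubalgebra 𝒜 d leibniz hy
  have hcentral {y : A} (hy : y ∈ evenSubalgebra 𝒜) := commute_of_mem_evenSubalgebra 𝒜 gcomm hy
  have hexp := expSum_mem hb N
  refine mul_twisted_eq_twisted_mul d (hleib hexp x) ?_ (hcentral hexp h)
  exact map_expSum_of_leibniz d (hleib hb) (hcentral hb _)
    (by simpa using hleib (one_mem _) 1) hnil

end GradedCommutative

theorem twisted_cohomology_gauge_invariance_general
    {A : Type*} [Ring A] [Algebra ℝ A]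
    (𝒜 : ℤ → Submodule ℝ A) [GradedAlgebra 𝒜]
    (gcomm : ∀ (i j : ℤ), ∀ x ∈ 𝒜 i, ∀ y ∈ 𝒜 j,
      x * y = ((-1 : ℝ) ^ (i * j)) • (y * x))
    (d : A →ₗ[ℝ] A)
    (leibniz : ∀ (i j : ℤ), ∀ x ∈ 𝒜 i, ∀ y ∈ 𝒜 j,
      d (x * y) = d x * y + ((-1 : ℝ) ^ i) • (x * d y))
    (n : ℕ)
    (hbdd : ∀ k : ℤ, (k < 0 ∨ (n : ℤ) < k) → 𝒜 k = ⊥)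
    (h : A)
    (b : A)
    (b_even_pos : b ∈ ⨆ k : ℕ, 𝒜 (2 * ((k : ℤ) + 1))) :
    -- `b` is nilpotent, so the exponential sum is a finite sum computing `Σ_{m≥0} bᵐ/m!`
    (∀ m : ℕ, n < m → b ^ m = 0) ∧
    -- left multiplication by `exp b` is invertible, with inverse multiplication by `exp (−b)`
    (expSum n b * expSum n (-b) = 1 ∧ expSum n (-b) * expSum n b = 1) ∧
    -- it is a chain map from `(A, d_{h + d b})` to `(A, d_h)`
    (∀ x : A, expSum n b * (d x + (h + d b) * x)
        = d (expSum n b * x) + h * (expSum n b * x)) ∧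
    -- consequently the even and odd twisted cohomology groups are isomorphic
    Nonempty (cohQuot (d + mulLeft ℝ (h + d b)) (⨆ k : ℤ, 𝒜 (2 * k)) ≃ₗ[ℝ]
      cohQuot (d + mulLeft ℝ h) (⨆ k : ℤ, 𝒜 (2 * k))) ∧
    Nonempty (cohQuot (d + mulLeft ℝ (h + d b)) (⨆ k : ℤ, 𝒜 (2 * k + 1)) ≃ₗ[ℝ]
      cohQuot (d + mulLeft ℝ h) (⨆ k : ℤ, 𝒜 (2 * k + 1))) := by
  have hb_even : b ∈ evenSubalgebra 𝒜 := by
    have : ⨆ k : ℕ, 𝒜 (2 * ((k : ℤ) + 1)) ≤ ⨆ k : ℤ, 𝒜 (2 * k) :=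
      iSup_mono' fun k => ⟨(k : ℤ) + 1, le_rfl⟩
    exact this b_even_pos
  have hb_pos : b ∈ degreeGE 𝒜 1 := by
    have : ⨆ k : ℕ, 𝒜 (2 * ((k : ℤ) + 1)) ≤ degreeGE 𝒜 1 :=
      iSup_mono' fun k => ⟨2 * k + 1, (congrArg 𝒜 (by push_cast; ring)).le⟩
    exact this b_even_pos
  have hb_nil : b ^ (n + 1) = 0 :=
    pow_eq_zero_of_mem_degreeGE_one 𝒜 (fun k hk => hbdd k (Or.inr hk)) hb_pos
  have chain := expSum_mul_twisted_eq 𝒜 gcomm d leibniz hb_even hb_nil h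
  have hinv := expSum_mul_expSum_neg hb_nil
  have hinv' : expSum n (-b) * expSum n b = 1 := by
    simpa using expSum_mul_expSum_neg (b := -b) (by rw [neg_pow, hb_nil, mul_zero])
  let u : Aˣ := ⟨_, _, hinv, hinv'⟩
  have hcomp : (u.mulLeftLinearEquiv ℝ A : A →ₗ[ℝ] A) ∘ₗ (d + mulLeft ℝ (h + d b)) =
      (d + mulLeft ℝ h) ∘ₗ u.mulLeftLinearEquiv ℝ A := LinearMap.ext chain
  have hu_even : (u : A) ∈ evenSubalgebra 𝒜 := expSum_mem hb_even n
  have hu_even' : ((u⁻¹ : Aˣ) : A) ∈ evenSubalgebra 𝒜 := expSum_mem (neg_mem hb_even) n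
  refine ⟨fun m hm => pow_eq_zero_of_le hm hb_nil, ⟨hinv, hinv'⟩, chain,
    nonempty_cohQuot_equiv_of_comp_eq _ hcomp ?_, nonempty_cohQuot_equiv_of_comp_eq _ hcomp ?_⟩
  · exact map_mulLeftLinearEquiv_eq_self u hu_even hu_even' fun c hc x hx =>
      (evenSubalgebra 𝒜).mul_mem hc hx
  · exact map_mulLeftLinearEquiv_eq_self u hu_even hu_even' fun c hc x hx =>
      mul_mem_odd_of_mem_evenSubalgebra 𝒜 hc hx

/-- Let `A` be a graded-commutative DGA over `ℝ` with `𝒜 k = ⊥` for `k < 0`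
and `k > n`; let `h` be a sum of homogeneous odd-degree elements with `d h = 0`, and let
`b` be a sum of homogeneous elements of positive even degree (hence nilpotent:
`b ^ m = 0` for `m > n`).  Set `h' = h + d b`.  Then left multiplication by the finite sum
`exp b = Σ bᵐ/m!` is an invertible chain map of ℤ₂-graded complexes from `(A, d_{h'})` to
`(A, d_h)` with inverse left multiplication by `exp (−b)`, and consequently it induces
isomorphisms `H^±(A, d_{h'}) ≅ H^±(A, d_h)`: the twisted cohomology depends only on the
`d`-cohomology class of `h`. -/
theorem twisted_cohomology_gauge_invariance
    {A : Type*} [Ring A] [Algebra ℝ A]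
    (𝒜 : ℤ → Submodule ℝ A) [GradedAlgebra 𝒜]
    (gcomm : ∀ (i j : ℤ), ∀ x ∈ 𝒜 i, ∀ y ∈ 𝒜 j,
      x * y = ((-1 : ℝ) ^ (i * j)) • (y * x))
    (d : A →ₗ[ℝ] A)
    (hd_deg : ∀ k : ℤ, Submodule.map d (𝒜 k) ≤ 𝒜 (k + 1))
    (hd2 : d ∘ₗ d = 0)
    (leibniz : ∀ (i j : ℤ), ∀ x ∈ 𝒜 i, ∀ y ∈ 𝒜 j,
      d (x * y) = d x * y + ((-1 : ℝ) ^ i) • (x * d y))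
    (n : ℕ)
    (hbdd : ∀ k : ℤ, (k < 0 ∨ (n : ℤ) < k) → 𝒜 k = ⊥)
    (h : A)
    (h_odd : h ∈ ⨆ k : ℤ, 𝒜 (2 * k + 1))
    (h_closed : d h = 0)
    (b : A)
    (b_even_pos : b ∈ ⨆ k : ℕ, 𝒜 (2 * ((k : ℤ) + 1))) :
    -- `b` is nilpotent, so the exponential sum is a finite sum computing `Σ_{m≥0} bᵐ/m!`
    (∀ m : ℕ, n < m → b ^ m = 0) ∧
    -- left multiplication by `exp b` is invertible, with inverse multiplication by `exp (−b)`
    (expSum n b * expSum n (-b) = 1 ∧ expSum n (-b) * expSum n b = 1) ∧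
    -- it is a chain map from `(A, d_{h + d b})` to `(A, d_h)`
    (∀ x : A, expSum n b * (d x + (h + d b) * x)
        = d (expSum n b * x) + h * (expSum n b * x)) ∧
    -- consequently the even and odd twisted cohomology groups are isomorphic
    Nonempty (cohQuot (d + mulLeft ℝ (h + d b)) (⨆ k : ℤ, 𝒜 (2 * k)) ≃ₗ[ℝ]
      cohQuot (d + mulLeft ℝ h) (⨆ k : ℤ, 𝒜 (2 * k))) ∧
    Nonempty (cohQuot (d + mulLeft ℝ (h + d b)) (⨆ k : ℤ, 𝒜 (2 * k + 1)) ≃ₗ[ℝ]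
      cohQuot (d + mulLeft ℝ h) (⨆ k : ℤ, 𝒜 (2 * k + 1))) :=
  twisted_cohomology_gauge_invariance_general 𝒜 gcomm d leibniz n hbdd h b b_even_pos
end

section
/- Let n ≥ 3 be odd and let A be a graded-commutative DGA over ℝ with Aᵏ = 0 for k < 0 and for k > n. Let h ∈ Aⁿ (which is automatically d-closed), and suppose that the map H⁰(A,d) → Hⁿ(A,d) induced by left multiplication by h, [λ] ↦ [h·λ], is a bijection. Then the ℤ₂-graded twisted cohomology of d_h(x) = dx + h·x satisfies: the even twisted cohomology H⁺(A, d_h) is isomorphic to ⊕_{k even, 2 ≤ k ≤ n−1} Hᵏ(A,d), and the odd twisted cohomology H⁻(A, d_h) is isomorphic to ⊕_{k odd, 1 ≤ k ≤ n−2} Hᵏ(A,d). In particular H(A, d_h) ≅ ⊕_{k=1}^{n−1} Hᵏ(A,d). -/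
open LinearMap DirectSum

/-- The ordinary degree-`k` cohomology `Hᵏ(A, d) = (𝒜 k ∩ ker d) / im d` of a graded
complex. -/
abbrev gradedCoh {A : Type*} [Ring A] [Algebra ℝ A] (𝒜 : ℤ → Submodule ℝ A)
    (d : A →ₗ[ℝ] A) (k : ℤ) :=
  ↥(𝒜 k ⊓ LinearMap.ker d) ⧸ (LinearMap.range d).comap (𝒜 k ⊓ LinearMap.ker d).subtype

/-!
Write `D = d + h·` for the twisted differential. Since `A` lives in degrees `0, …, n` and
`h ∈ Aⁿ`, only the degree-zero part of `x` contributes to `h x`, so `D x = d x + h x₀`.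
Surjectivity of `[λ] ↦ [hλ]` makes all of `Aⁿ` `D`-exact, and then `im d ⊆ im D`;
injectivity forces `x₀ = 0` for every `D`-cocycle `x`, which is therefore an ordinary cocycle.
Hence a `D`-cocycle of a given parity is `D`-exact exactly when its components of degree
`1, …, n - 1` are `d`-exact: degree `0` has been killed by injectivity and degree `n` by
surjectivity. Taking those components identifies each parity of the twisted cohomology with
the ordinary cohomology in the degrees of that parity strictly between `0` and `n`.
-/

open GradedAlgebra

namespace GradedAlgebra

section

variable {ι R A : Type*} [DecidableEq ι] [AddMonoid ι] [CommSemiring R] [Semiring A]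
  [Algebra R A] {𝒜 : ι → Submodule R A} [GradedAlgebra 𝒜]

theorem proj_mem (i : ι) (x : A) : proj 𝒜 i x ∈ 𝒜 i :=
  (decompose 𝒜 x i).2

theorem proj_apply_of_mem_same {i : ι} {x : A} (hx : x ∈ 𝒜 i) : proj 𝒜 i x = x :=
  decompose_of_mem_same 𝒜 hx

theorem proj_apply_of_mem_ne {i j : ι} {x : A} (hx : x ∈ 𝒜 i) (hij : i ≠ j) :
    proj 𝒜 j x = 0 :=
  decompose_of_mem_ne 𝒜 hx hij

theorem proj_apply_of_eq_bot {i : ι} (hi : 𝒜 i = ⊥) (x : A) : proj 𝒜 i x = 0 := by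
  simpa [hi] using proj_mem (𝒜 := 𝒜) i x

theorem mem_of_forall_proj_mem {M : Submodule R A} {x : A} (hx : ∀ i, proj 𝒜 i x ∈ M) :
    x ∈ M := by
  classical
  rw [← sum_support_decompose 𝒜 x]
  exact M.sum_mem fun i _ => hx i

theorem proj_apply_eq_zero_of_mem_iSup {κ : Type*} {f : κ → ι} {x : A}
    (hx : x ∈ ⨆ j, 𝒜 (f j)) {i : ι} (hi : ∀ j, f j ≠ i) : proj 𝒜 i x = 0 := by
  induction hx using Submodule.iSup_induction' with
  | mem j y hy => exact proj_apply_of_mem_ne hy (hi j)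
  | zero => exact map_zero _
  | add y z _ _ hy hz => rw [map_add, hy, hz, add_zero]

end

theorem proj_add_one_apply_of_map_le {R A : Type*} [CommSemiring R] [Semiring A] [Algebra R A]
    {𝒜 : ℤ → Submodule R A} [GradedAlgebra 𝒜] {d : A →ₗ[R] A}
    (hd : ∀ k, (𝒜 k).map d ≤ 𝒜 (k + 1)) (k : ℤ) (x : A) :
    proj 𝒜 (k + 1) (d x) = d (proj 𝒜 k x) := by
  induction x using DirectSum.Decomposition.inductionOn 𝒜 with
  | zero => simp
  | @homogeneous i y =>
    have hdy : d y ∈ 𝒜 (i + 1) := hd i ⟨y, y.2, rfl⟩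
    by_cases hik : i = k
    · subst hik
      rw [proj_apply_of_mem_same hdy, proj_apply_of_mem_same y.2]
    · rw [proj_apply_of_mem_ne hdy (by omega), proj_apply_of_mem_ne y.2 hik, map_zero]
  | add y z hy hz => simp only [map_add, hy, hz]

end GradedAlgebra

section Twisted

variable {R A : Type*} [CommRing R] [Ring A] [Algebra R A] {𝒜 : ℤ → Submodule R A}
  [GradedAlgebra 𝒜] {d : A →ₗ[R] A} {n : ℕ} {h : A}

theorem mul_eq_mul_proj_zero (hbdd : ∀ k : ℤ, (k < 0 ∨ (n : ℤ) < k) → 𝒜 k = ⊥)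
    (hh : h ∈ 𝒜 n) (x : A) : h * x = h * proj 𝒜 0 x := by
  induction x using DirectSum.Decomposition.inductionOn 𝒜 with
  | zero => simp
  | @homogeneous i y =>
    obtain rfl | hi := eq_or_ne i 0
    · rw [proj_apply_of_mem_same y.2]
    rw [proj_apply_of_mem_ne y.2 hi, mul_zero]
    rcases hi.lt_or_gt with hneg | hpos
    · have hy : (y : A) ∈ (⊥ : Submodule R A) := hbdd i (.inl hneg) ▸ y.2
      rw [(Submodule.mem_bot R).1 hy, mul_zero]
    · have hhy : h * y ∈ (⊥ : Submodule R A) :=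
        hbdd (n + i) (.inr (by omega)) ▸ SetLike.mul_mem_graded hh y.2
      exact (Submodule.mem_bot R).1 hhy
  | add y z hy hz => rw [mul_add, map_add, mul_add, hy, hz]

theorem twisted_apply (hbdd : ∀ k : ℤ, (k < 0 ∨ (n : ℤ) < k) → 𝒜 k = ⊥) (hh : h ∈ 𝒜 n)
    (x : A) : (d + mulLeft R h) x = d x + h * proj 𝒜 0 x := by
  rw [LinearMap.add_apply, mulLeft_apply, mul_eq_mul_proj_zero hbdd hh]

theorem mul_proj_zero_mem (hh : h ∈ 𝒜 n) (x : A) : h * proj 𝒜 0 x ∈ 𝒜 n := by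
  simpa using SetLike.mul_mem_graded hh (proj_mem 0 x)

theorem top_degree_le_range_twisted (hd : ∀ k, (𝒜 k).map d ≤ 𝒜 (k + 1))
    (hbdd : ∀ k : ℤ, (k < 0 ∨ (n : ℤ) < k) → 𝒜 k = ⊥) (hh : h ∈ 𝒜 n) (hn : n ≠ 1)
    (hsurj : ∀ z ∈ 𝒜 n, ∃ lam, lam ∈ 𝒜 0 ∧ d lam = 0 ∧ z - h * lam ∈ range d) :
    𝒜 n ≤ range (d + mulLeft R h) := by
  intro z hz
  obtain ⟨lam, hlam, hdlam, u, hu⟩ := hsurj z hz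
  have hzlam : z - h * lam ∈ 𝒜 n := sub_mem hz (by simpa using SetLike.mul_mem_graded hh hlam)
  refine ⟨lam + proj 𝒜 (n - 1) u, ?_⟩
  have hdu : d (proj 𝒜 (n - 1) u) = z - h * lam := by
    rw [← proj_add_one_apply_of_map_le hd, sub_add_cancel, hu, proj_apply_of_mem_same hzlam]
  rw [twisted_apply hbdd hh, map_add, map_add, hdlam, hdu, proj_apply_of_mem_same hlam,
    proj_apply_of_mem_ne (proj_mem _ _) (by omega), add_zero]
  abel

theorem range_le_range_twisted (hbdd : ∀ k : ℤ, (k < 0 ∨ (n : ℤ) < k) → 𝒜 k = ⊥)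
    (hh : h ∈ 𝒜 n) (htop : 𝒜 n ≤ range (d + mulLeft R h)) :
    range d ≤ range (d + mulLeft R h) := by
  rintro _ ⟨u, rfl⟩
  have hdu : d u = (d + mulLeft R h) u - h * proj 𝒜 0 u := by
    rw [twisted_apply hbdd hh, add_sub_cancel_right]
  rw [hdu]
  exact sub_mem ⟨u, rfl⟩ (htop (mul_proj_zero_mem hh u))

theorem twisted_eq_zero_iff (hd : ∀ k, (𝒜 k).map d ≤ 𝒜 (k + 1))
    (hbdd : ∀ k : ℤ, (k < 0 ∨ (n : ℤ) < k) → 𝒜 k = ⊥) (hh : h ∈ 𝒜 n) (hn : n ≠ 1)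
    (hinj : ∀ lam, lam ∈ 𝒜 0 → d lam = 0 → h * lam ∈ range d → lam ∈ range d) {x : A} :
    (d + mulLeft R h) x = 0 ↔ d x = 0 ∧ proj 𝒜 0 x = 0 := by
  rw [twisted_apply hbdd hh]
  refine ⟨fun hx => ?_, fun ⟨hdx, hx₀⟩ => by rw [hdx, hx₀, mul_zero, add_zero]⟩
  have hdx : d x = -(h * proj 𝒜 0 x) := eq_neg_of_add_eq_zero_left hx
  suffices hx₀ : proj 𝒜 0 x = 0 from ⟨by rw [hdx, hx₀, mul_zero, neg_zero], hx₀⟩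
  have hdx₀ : d (proj 𝒜 0 x) = 0 := by
    rw [← proj_add_one_apply_of_map_le hd, hdx, map_neg,
      proj_apply_of_mem_ne (mul_proj_zero_mem hh x) (by omega), neg_zero]
  obtain ⟨u, hu⟩ := hinj _ (proj_mem 0 x) hdx₀ ⟨-x, by rw [map_neg, hdx, neg_neg]⟩
  rw [← proj_apply_of_mem_same (proj_mem (𝒜 := 𝒜) 0 x), ← hu, ← neg_add_cancel (1 : ℤ),
    proj_add_one_apply_of_map_le hd, proj_apply_of_eq_bot (hbdd _ (.inl (by norm_num))),
    map_zero]

theorem proj_mem_range_of_mem_range_twisted (hd : ∀ k, (𝒜 k).map d ≤ 𝒜 (k + 1))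
    (hbdd : ∀ k : ℤ, (k < 0 ∨ (n : ℤ) < k) → 𝒜 k = ⊥) (hh : h ∈ 𝒜 n) {x : A}
    (hx : x ∈ range (d + mulLeft R h)) {k : ℤ} (hk : k ≠ n) : proj 𝒜 k x ∈ range d := by
  obtain ⟨u, rfl⟩ := hx
  refine ⟨proj 𝒜 (k - 1) u, ?_⟩
  rw [twisted_apply hbdd hh, map_add, proj_apply_of_mem_ne (mul_proj_zero_mem hh u) hk.symm,
    add_zero, ← proj_add_one_apply_of_map_le hd, sub_add_cancel]

end Twisted

theorem DirectSum.nonempty_prod_linearEquiv_of_iff_or {R ι : Type*} [Semiring R]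
    (M : ι → Type*) [∀ i, AddCommMonoid (M i)] [∀ i, Module R (M i)] {p q r : ι → Prop}
    [Finite {i // p i}] [Finite {i // q i}] [Finite {i // r i}]
    (hpq : ∀ i, p i → ¬q i) (hr : ∀ i, r i ↔ p i ∨ q i) :
    Nonempty (((⨁ i : {i // p i}, M i) × ⨁ i : {i // q i}, M i) ≃ₗ[R]
      ⨁ i : {i // r i}, M i) := by
  classical
  have := Fintype.ofFinite {i // p i}
  have := Fintype.ofFinite {i // q i}
  have := Fintype.ofFinite {i // r i}
  let e : (((i : {i // p i}) → M i) × ((i : {i // q i}) → M i)) ≃ₗ[R] (i : {i // r i}) → M i :=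
    { toFun fg i := if hp : p i then fg.1 ⟨i, hp⟩ else fg.2 ⟨i, ((hr i).1 i.2).resolve_left hp⟩
      invFun F := (fun i => F ⟨i, (hr i).2 (.inl i.2)⟩, fun i => F ⟨i, (hr i).2 (.inr i.2)⟩)
      map_add' _ _ := by funext i; by_cases hp : p i <;> simp [hp]
      map_smul' _ _ := by funext i; by_cases hp : p i <;> simp [hp]
      left_inv fg := by
        ext i
        · exact dif_pos i.2
        · exact dif_neg (fun hp => hpq i hp i.2)
      right_inv F := by funext i; dsimp only; split_ifs <;> rfl }
  exact ⟨(LinearEquiv.prodCongr (linearEquivFunOnFintype R _ _)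
    (linearEquivFunOnFintype R _ _)).trans (e.trans (linearEquivFunOnFintype R _ _).symm)⟩

theorem nonempty_cohQuot_linearEquiv_directSum {A : Type*} [Ring A] [Algebra ℝ A]
    {𝒜 : ℤ → Submodule ℝ A} [GradedAlgebra 𝒜] {d D : A →ₗ[ℝ] A} {P : Submodule ℝ A}
    {p : ℤ → Prop} [Finite {k // p k}]
    (hclosed : ∀ x ∈ P, D x = 0 → ∀ k, p k → d (proj 𝒜 k x) = 0)
    (hcocycle : ∀ k, p k → ∀ z ∈ 𝒜 k, d z = 0 → z ∈ P ∧ D z = 0)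
    (hrange : ∀ x ∈ P, D x = 0 → (x ∈ range D ↔ ∀ k, p k → proj 𝒜 k x ∈ range d)) :
    Nonempty (cohQuot D P ≃ₗ[ℝ] ⨁ k : {k // p k}, gradedCoh 𝒜 d k) := by
  classical
  have := Fintype.ofFinite {k // p k}
  let φ (k : {k // p k}) : ↥(P ⊓ ker D) →ₗ[ℝ] gradedCoh 𝒜 d k :=
    Submodule.mkQ _ ∘ₗ (proj 𝒜 k ∘ₗ (P ⊓ ker D).subtype).codRestrict _
      fun x => ⟨proj_mem _ _, hclosed x x.2.1 x.2.2 k k.2⟩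
  have hker : ker (LinearMap.pi φ) = (range D).comap (P ⊓ ker D).subtype := by
    ext x
    simp only [φ, LinearMap.mem_ker, funext_iff, LinearMap.pi_apply, comp_apply,
      Submodule.mkQ_apply, Submodule.Quotient.mk_eq_zero, Submodule.mem_comap,
      Submodule.subtype_apply, Subtype.forall, Pi.zero_apply, hrange x x.2.1 x.2.2]
    rfl
  have hsurj : Function.Surjective (LinearMap.pi φ) := by
    intro f
    choose z hz using fun k => Submodule.Quotient.mk_surjective _ (f k)
    have hmem : ∑ k, (z k : A) ∈ P ⊓ ker D :=
      sum_mem fun k _ => hcocycle k k.2 _ (z k).2.1 (z k).2.2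
    refine ⟨⟨_, hmem⟩, funext fun k => ?_⟩
    rw [← hz k]
    simp only [LinearMap.pi_apply, φ, comp_apply, Submodule.mkQ_apply]
    congr 1
    ext
    change proj 𝒜 k (∑ j, (z j : A)) = z k
    rw [map_sum, Finset.sum_eq_single k (fun j _ hjk => proj_apply_of_mem_ne (z j).2.1
      (Subtype.val_injective.ne hjk)) (by simp)]
    exact proj_apply_of_mem_same (z k).2.1
  have e1 : cohQuot D P ≃ₗ[ℝ] _ ⧸ ker (LinearMap.pi φ) := Submodule.quotEquivOfEq _ _ hker.symm
  -- without this local family, the instance on the dependent product is not found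
  let _ (k : {k // p k}) : AddCommGroup (gradedCoh 𝒜 d k) := inferInstance
  have e2 := LinearMap.quotKerEquivOfSurjective _ hsurj
  have e3 := (linearEquivFunOnFintype ℝ {k // p k} (fun k => gradedCoh 𝒜 d k)).symm
  exact ⟨e1.trans (e2.trans e3)⟩

theorem nonempty_cohQuot_twisted_linearEquiv {A : Type*} [Ring A] [Algebra ℝ A]
    {𝒜 : ℤ → Submodule ℝ A} [GradedAlgebra 𝒜] {d : A →ₗ[ℝ] A} {n : ℕ} {h : A}
    (hd : ∀ k, (𝒜 k).map d ≤ 𝒜 (k + 1)) (hbdd : ∀ k : ℤ, (k < 0 ∨ (n : ℤ) < k) → 𝒜 k = ⊥)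
    (hh : h ∈ 𝒜 n) (hn : n ≠ 1)
    (hsurj : ∀ z ∈ 𝒜 n, ∃ lam, lam ∈ 𝒜 0 ∧ d lam = 0 ∧ z - h * lam ∈ range d)
    (hinj : ∀ lam, lam ∈ 𝒜 0 → d lam = 0 → h * lam ∈ range d → lam ∈ range d)
    {P : Submodule ℝ A} {p : ℤ → Prop} [Finite {k // p k}]
    (hp : ∀ k, p k → 0 < k ∧ k < n ∧ 𝒜 k ≤ P)
    (hP : ∀ x ∈ P, ∀ k : ℤ, 0 < k → k < n → ¬p k → proj 𝒜 k x = 0) :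
    Nonempty (cohQuot (d + mulLeft ℝ h) P ≃ₗ[ℝ] ⨁ k : {k // p k}, gradedCoh 𝒜 d k) := by
  have htop := top_degree_le_range_twisted hd hbdd hh hn hsurj
  have hker_iff {x : A} := twisted_eq_zero_iff hd hbdd hh hn hinj (x := x)
  refine nonempty_cohQuot_linearEquiv_directSum (fun x _ hx k _ => ?_) (fun k hk z hz hdz => ?_)
    fun x hxP hx => ⟨fun hxD k hk => ?_, fun hcomp => mem_of_forall_proj_mem (𝒜 := 𝒜) fun k => ?_⟩
  · rw [← proj_add_one_apply_of_map_le hd, (hker_iff.1 hx).1, map_zero]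
  · obtain ⟨hk0, -, hkP⟩ := hp k hk
    exact ⟨hkP hz, hker_iff.2 ⟨hdz, proj_apply_of_mem_ne hz hk0.ne'⟩⟩
  · exact proj_mem_range_of_mem_range_twisted hd hbdd hh hxD (hp k hk).2.1.ne
  by_cases hk : p k
  · exact range_le_range_twisted hbdd hh htop (hcomp k hk)
  obtain hk0 | rfl | hk0 := lt_trichotomy k 0
  · rw [proj_apply_of_eq_bot (hbdd k (.inl hk0))]
    exact zero_mem _
  · rw [(hker_iff.1 hx).2]
    exact zero_mem _
  obtain hkn | rfl | hkn := lt_trichotomy k (n : ℤ)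
  · rw [hP x hxP k hk0 hkn hk]
    exact zero_mem _
  · exact htop (proj_mem _ _)
  · rw [proj_apply_of_eq_bot (hbdd k (.inr hkn))]
    exact zero_mem _

theorem Int.finite_subtype_of_forall_mem_Icc {p : ℤ → Prop} {a b : ℤ}
    (hp : ∀ k, p k → k ∈ Set.Icc a b) : Finite {k // p k} :=
  ((Set.finite_Icc a b).subset hp).to_subtype

theorem twisted_cohomology_of_top_degree_flux_general
    {A : Type*} [Ring A] [Algebra ℝ A]
    (𝒜 : ℤ → Submodule ℝ A) [GradedAlgebra 𝒜]
    (d : A →ₗ[ℝ] A)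
    (hd_deg : ∀ k : ℤ, Submodule.map d (𝒜 k) ≤ 𝒜 (k + 1))
    (n : ℕ) (hn3 : 3 ≤ n) (hnodd : Odd n)
    (hbdd : ∀ k : ℤ, (k < 0 ∨ (n : ℤ) < k) → 𝒜 k = ⊥)
    (h : A) (hh : h ∈ 𝒜 (n : ℤ))
    -- surjectivity of `[λ] ↦ [h·λ] : H⁰(A,d) → Hⁿ(A,d)` (every `z ∈ 𝒜 n` is closed)
    (hsurj : ∀ z ∈ 𝒜 (n : ℤ), ∃ lam, lam ∈ 𝒜 0 ∧ d lam = 0 ∧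
      z - h * lam ∈ LinearMap.range d)
    -- injectivity of `[λ] ↦ [h·λ] : H⁰(A,d) → Hⁿ(A,d)`
    (hinj : ∀ lam, lam ∈ 𝒜 0 → d lam = 0 → h * lam ∈ LinearMap.range d →
      lam ∈ LinearMap.range d) :
    -- `H⁺(A, d_h) ≅ ⊕_{k even, 2 ≤ k ≤ n−1} Hᵏ(A, d)`
    Nonempty (cohQuot (d + mulLeft ℝ h) (⨆ k : ℤ, 𝒜 (2 * k)) ≃ₗ[ℝ]
      ⨁ k : {k : ℤ // Even k ∧ 2 ≤ k ∧ k ≤ (n : ℤ) - 1}, gradedCoh 𝒜 d k.val) ∧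
    -- `H⁻(A, d_h) ≅ ⊕_{k odd, 1 ≤ k ≤ n−2} Hᵏ(A, d)`
    Nonempty (cohQuot (d + mulLeft ℝ h) (⨆ k : ℤ, 𝒜 (2 * k + 1)) ≃ₗ[ℝ]
      ⨁ k : {k : ℤ // Odd k ∧ 1 ≤ k ∧ k ≤ (n : ℤ) - 2}, gradedCoh 𝒜 d k.val) ∧
    -- in particular `H(A, d_h) ≅ ⊕_{k=1}^{n−1} Hᵏ(A, d)`
    Nonempty ((cohQuot (d + mulLeft ℝ h) (⨆ k : ℤ, 𝒜 (2 * k)) ×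
        cohQuot (d + mulLeft ℝ h) (⨆ k : ℤ, 𝒜 (2 * k + 1))) ≃ₗ[ℝ]
      ⨁ k : {k : ℤ // 1 ≤ k ∧ k ≤ (n : ℤ) - 1}, gradedCoh 𝒜 d k.val) := by
  obtain ⟨m, hm⟩ := hnodd
  have hn : n ≠ 1 := by omega
  have := Int.finite_subtype_of_forall_mem_Icc (p := fun k => Even k ∧ 2 ≤ k ∧ k ≤ (n : ℤ) - 1)
    fun _ hk => hk.2
  have := Int.finite_subtype_of_forall_mem_Icc (p := fun k => Odd k ∧ 1 ≤ k ∧ k ≤ (n : ℤ) - 2)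
    fun _ hk => hk.2
  have := Int.finite_subtype_of_forall_mem_Icc (p := fun k => 1 ≤ k ∧ k ≤ (n : ℤ) - 1)
    fun _ hk => hk
  obtain ⟨eE⟩ := nonempty_cohQuot_twisted_linearEquiv hd_deg hbdd hh hn hsurj hinj
    (P := ⨆ k : ℤ, 𝒜 (2 * k)) (p := fun k => Even k ∧ 2 ≤ k ∧ k ≤ (n : ℤ) - 1)
    (fun k ⟨⟨r, hr⟩, _⟩ => ⟨by omega, by omega, le_iSup_of_le r (by rw [hr, two_mul])⟩)
    fun x hx k _ _ hk => proj_apply_eq_zero_of_mem_iSup hx fun j hj => hk ⟨⟨j, by omega⟩, by omega⟩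
  obtain ⟨eO⟩ := nonempty_cohQuot_twisted_linearEquiv hd_deg hbdd hh hn hsurj hinj
    (P := ⨆ k : ℤ, 𝒜 (2 * k + 1)) (p := fun k => Odd k ∧ 1 ≤ k ∧ k ≤ (n : ℤ) - 2)
    (fun k ⟨⟨r, hr⟩, _⟩ => ⟨by omega, by omega, le_iSup_of_le r (by rw [hr])⟩)
    fun x hx k _ _ hk => proj_apply_eq_zero_of_mem_iSup hx fun j hj => hk ⟨⟨j, hj.symm⟩, by omega⟩
  obtain ⟨e⟩ := DirectSum.nonempty_prod_linearEquiv_of_iff_or (R := ℝ) (gradedCoh 𝒜 d)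
    (p := fun k => Even k ∧ 2 ≤ k ∧ k ≤ (n : ℤ) - 1) (q := fun k => Odd k ∧ 1 ≤ k ∧ k ≤ (n : ℤ) - 2)
    (r := fun k => 1 ≤ k ∧ k ≤ (n : ℤ) - 1) (fun k hE hO => Int.not_odd_iff_even.2 hE.1 hO.1)
    fun k => by simp only [Int.even_iff, Int.odd_iff]; omega
  exact ⟨⟨eE⟩, ⟨eO⟩, ⟨(eE.prodCongr eO).trans e⟩⟩

/-- Let `n ≥ 3` be odd and `A` a graded-commutative DGA over `ℝ` with
`𝒜 k = ⊥` for `k < 0` and `k > n`.  Let `h ∈ 𝒜 n` (automatically `d`-closed), and suppose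
that the map `H⁰(A,d) → Hⁿ(A,d)`, `[λ] ↦ [h·λ]`, is a bijection (expressed element-wise
below).  Then the even twisted cohomology `H⁺(A, d_h)` is isomorphic to
`⊕_{k even, 2 ≤ k ≤ n−1} Hᵏ(A,d)`, the odd twisted cohomology `H⁻(A, d_h)` is isomorphic to
`⊕_{k odd, 1 ≤ k ≤ n−2} Hᵏ(A,d)`, and in particular
`H(A, d_h) ≅ ⊕_{k=1}^{n−1} Hᵏ(A,d)`. -/
theorem twisted_cohomology_of_top_degree_flux
    {A : Type*} [Ring A] [Algebra ℝ A]
    (𝒜 : ℤ → Submodule ℝ A) [GradedAlgebra 𝒜]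
    (gcomm : ∀ (i j : ℤ), ∀ x ∈ 𝒜 i, ∀ y ∈ 𝒜 j,
      x * y = ((-1 : ℝ) ^ (i * j)) • (y * x))
    (d : A →ₗ[ℝ] A)
    (hd_deg : ∀ k : ℤ, Submodule.map d (𝒜 k) ≤ 𝒜 (k + 1))
    (hd2 : d ∘ₗ d = 0)
    (leibniz : ∀ (i j : ℤ), ∀ x ∈ 𝒜 i, ∀ y ∈ 𝒜 j,
      d (x * y) = d x * y + ((-1 : ℝ) ^ i) • (x * d y))
    (n : ℕ) (hn3 : 3 ≤ n) (hnodd : Odd n)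
    (hbdd : ∀ k : ℤ, (k < 0 ∨ (n : ℤ) < k) → 𝒜 k = ⊥)
    (h : A) (hh : h ∈ 𝒜 (n : ℤ))
    -- surjectivity of `[λ] ↦ [h·λ] : H⁰(A,d) → Hⁿ(A,d)` (every `z ∈ 𝒜 n` is closed)
    (hsurj : ∀ z ∈ 𝒜 (n : ℤ), ∃ lam, lam ∈ 𝒜 0 ∧ d lam = 0 ∧
      z - h * lam ∈ LinearMap.range d)
    -- injectivity of `[λ] ↦ [h·λ] : H⁰(A,d) → Hⁿ(A,d)`
    (hinj : ∀ lam, lam ∈ 𝒜 0 → d lam = 0 → h * lam ∈ LinearMap.range d →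
      lam ∈ LinearMap.range d) :
    -- `H⁺(A, d_h) ≅ ⊕_{k even, 2 ≤ k ≤ n−1} Hᵏ(A, d)`
    Nonempty (cohQuot (d + mulLeft ℝ h) (⨆ k : ℤ, 𝒜 (2 * k)) ≃ₗ[ℝ]
      ⨁ k : {k : ℤ // Even k ∧ 2 ≤ k ∧ k ≤ (n : ℤ) - 1}, gradedCoh 𝒜 d k.val) ∧
    -- `H⁻(A, d_h) ≅ ⊕_{k odd, 1 ≤ k ≤ n−2} Hᵏ(A, d)`
    Nonempty (cohQuot (d + mulLeft ℝ h) (⨆ k : ℤ, 𝒜 (2 * k + 1)) ≃ₗ[ℝ]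
      ⨁ k : {k : ℤ // Odd k ∧ 1 ≤ k ∧ k ≤ (n : ℤ) - 2}, gradedCoh 𝒜 d k.val) ∧
    -- in particular `H(A, d_h) ≅ ⊕_{k=1}^{n−1} Hᵏ(A, d)`
    Nonempty ((cohQuot (d + mulLeft ℝ h) (⨆ k : ℤ, 𝒜 (2 * k)) ×
        cohQuot (d + mulLeft ℝ h) (⨆ k : ℤ, 𝒜 (2 * k + 1))) ≃ₗ[ℝ]
      ⨁ k : {k : ℤ // 1 ≤ k ∧ k ≤ (n : ℤ) - 1}, gradedCoh 𝒜 d k.val) :=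
  twisted_cohomology_of_top_degree_flux_general 𝒜 d hd_deg n hn3 hnodd hbdd h hh hsurj hinj
end
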